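/- arXiv:1802.08892 — 2 statements merged into one kernel-verified Lean document; each statement's English description precedes it below -/
import Mathlib

section
/- Let 𝔄 be an arbitrary n-ary algebra over a field 𝔽 (n ≥ 2), with product [·,…,·], and let ℬ = {e_i : i ∈ I} be any basis of 𝔄. Then, writing f for the product, 𝔄 decomposes as 𝔄 = ⊕_{[𝔄_{[e_i]}] ∈ ℱ/≈} ⌢𝔄_{[e_i]}, where each ⌢𝔄_{[e_i]} is an ideal of 𝔄, and any pair of distinct ideals in this decomposition is f-orthogonal, i.e. [𝔄, …, ⌢𝔄_{[e_i]} in slot k₁, …, ⌢𝔄_{[e_j]} in slot k₂, …, 𝔄] = 0 whenever the classes differ and k₁ ≠ k₂. -/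
/- Common setting: `V` is a vector space over a field `𝔽`, and `f` is an
`n`-linear map on `V` where `n = m + 1 ≥ 2` (i.e. `1 ≤ m`).  Tuples of
length `n - 1 = m` index the last arguments of the set-valued map `F`. -/

open scoped Classical

noncomputable section

variable {𝔽 V I : Type*}

/-- The set `V* = V \ {0}` of nonzero vectors. -/
abbrev Vstar (V : Type*) [Zero V] := {v : V // v ≠ 0}

/-- The disjoint union `ℬ ∪̇ ℬ̄`, encoded by indices: `(false, i)` stands for the
basis vector `e i ∈ ℬ` and `(true, i)` for the formal bar symbol `ē i ∈ ℬ̄`. -/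
abbrev BSym (I : Type*) := Bool × I

/-- The bar-swap on `ℬ ∪̇ ℬ̄`. -/
def barSwap {I : Type*} (s : BSym I) : BSym I := (!s.1, s.2)

variable [Field 𝔽] [AddCommGroup V] [Module 𝔽 V] {m : ℕ}

/-- A basis vector, as an element of `V*`. -/
def bstar (b : Module.Basis I 𝔽 V) (i : I) : Vstar V := ⟨b i, b.ne_zero i⟩

/-- The set-valued map `F : 𝒫(V*) × (ℬ ∪̇ ℬ̄)^{n-1} → 𝒫(V*)` associated to the
`n`-linear map `f` and the basis `b` (here `n = m + 1`). -/
def Fmap (b : Module.Basis I 𝔽 V) (f : MultilinearMap 𝔽 (fun _ : Fin (m + 1) => V) V)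
    (U : Set (Vstar V)) (ξ : Fin m → BSym I) : Set (Vstar V) :=
  if ∀ t, (ξ t).1 = false then
    {w | ∃ (k : Fin (m + 1)) (σ : Equiv.Perm (Fin m)), ∃ u ∈ U,
      f (Fin.insertNth k u.1 fun t => b (ξ (σ t)).2) = w.1}
  else if ∀ t, (ξ t).1 = true then
    {w | ∃ (k : Fin (m + 1)) (σ : Equiv.Perm (Fin m)), ∃ u ∈ U,
      f (Fin.insertNth k w.1 fun t => b (ξ (σ t)).2) = u.1}
  else ∅

/-- Iterated application of `F` along a list of `(n-1)`-tuples. -/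
def iterF (b : Module.Basis I 𝔽 V) (f : MultilinearMap 𝔽 (fun _ : Fin (m + 1) => V) V) :
    Set (Vstar V) → List (Fin m → BSym I) → Set (Vstar V)
  | U, [] => U
  | U, X :: Xs => iterF b f (Fmap b f U X) Xs

/-- `X` is a connection from `e i` to `e j`.  (Since `F(∅,⋯) = ∅`, the requirement
that all intermediate iterated images are nonempty is equivalent to the final
image containing `e j`.) -/
def IsConnection (b : Module.Basis I 𝔽 V) (f : MultilinearMap 𝔽 (fun _ : Fin (m + 1) => V) V)
    (i j : I) (X : List (Fin m → BSym I)) : Prop :=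
  X ≠ [] ∧ bstar b j ∈ iterF b f {bstar b i} X

/-- `e i` is connected to `e j`. -/
def Connected (b : Module.Basis I 𝔽 V) (f : MultilinearMap 𝔽 (fun _ : Fin (m + 1) => V) V)
    (i j : I) : Prop :=
  i = j ∨ ∃ X : List (Fin m → BSym I), IsConnection b f i j X

/-- Two subspaces `W₁, W₂` are `f`-orthogonal. -/
def FOrthogonal (f : MultilinearMap 𝔽 (fun _ : Fin (m + 1) => V) V)
    (W₁ W₂ : Submodule 𝔽 V) : Prop :=
  ∀ k₁ k₂ : Fin (m + 1), k₁ ≠ k₂ →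
    ∀ v : Fin (m + 1) → V, v k₁ ∈ W₁ → v k₂ ∈ W₂ → f v = 0

/-- A subspace `W` is strongly `f`-invariant: `f(V,…,W,…,V) ⊆ W` for every slot. -/
def StronglyInvariant (f : MultilinearMap 𝔽 (fun _ : Fin (m + 1) => V) V)
    (W : Submodule 𝔽 V) : Prop :=
  ∀ (k : Fin (m + 1)) (v : Fin (m + 1) → V), v k ∈ W → f v ∈ W

/-- `V_{[e i]}`, the span of the connection class of `e i`. -/
def classSpan (b : Module.Basis I 𝔽 V) (f : MultilinearMap 𝔽 (fun _ : Fin (m + 1) => V) V)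
    (i : I) : Submodule 𝔽 V :=
  Submodule.span 𝔽 (⇑b '' {j | Connected b f i j})

/-- The projection `Π_{V_{[e c]}} : V → V_{[e c]}` relative to the decomposition
`V = ⊕ V_{[e i]}` (expressed through basis coordinates). -/
def projClass (b : Module.Basis I 𝔽 V) (f : MultilinearMap 𝔽 (fun _ : Fin (m + 1) => V) V)
    (c : I) : V →ₗ[𝔽] V :=
  b.constr 𝔽 fun j => if Connected b f c j then b j else 0

/-- One step of the relation `≈`: the sum over `k₁ < k₂` of
`Π_{V_{[c]}}(f(V,…,V_{[d]},…,V_{[d]},…,V)) + Π_{V_{[d]}}(f(V,…,V_{[c]},…,V_{[c]},…,V))`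
is nonzero. -/
def ApproxStep (b : Module.Basis I 𝔽 V) (f : MultilinearMap 𝔽 (fun _ : Fin (m + 1) => V) V)
    (c d : I) : Prop :=
  ∃ k₁ k₂ : Fin (m + 1), k₁ < k₂ ∧
    ((∃ v : Fin (m + 1) → V, v k₁ ∈ classSpan b f d ∧ v k₂ ∈ classSpan b f d ∧
        projClass b f c (f v) ≠ 0) ∨
     (∃ v : Fin (m + 1) → V, v k₁ ∈ classSpan b f c ∧ v k₂ ∈ classSpan b f c ∧
        projClass b f d (f v) ≠ 0))

/-- `V_{[e i]} ≈ V_{[e j]}`: either they coincide (same connection class) or they are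
linked by a finite chain of classes with nonvanishing projection sums. -/
def Approx (b : Module.Basis I 𝔽 V) (f : MultilinearMap 𝔽 (fun _ : Fin (m + 1) => V) V)
    (i j : I) : Prop :=
  Relation.ReflTransGen (fun c d => Connected b f c d ∨ ApproxStep b f c d) i j

/-- `⌢V_{[e i]} = ⊕_{V_{[e j]} ∈ [V_{[e i]}]} V_{[e j]}`. -/
def hatSpan (b : Module.Basis I 𝔽 V) (f : MultilinearMap 𝔽 (fun _ : Fin (m + 1) => V) V)
    (i : I) : Submodule 𝔽 V :=
  Submodule.span 𝔽 (⇑b '' {j | Approx b f i j})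

/-- Two decompositions of `V` as `f`-orthogonal direct sums of strongly `f`-invariant
subspaces (given as the sets of their summands) are isomorphic: there is a linear
automorphism `h` of `V` commuting with `f` carrying the summands of the first
bijectively onto the summands of the second. -/
def IsoDecomp (f : MultilinearMap 𝔽 (fun _ : Fin (m + 1) => V) V)
    (S T : Set (Submodule 𝔽 V)) : Prop :=
  ∃ h : V ≃ₗ[𝔽] V,
    (∀ v : Fin (m + 1) → V, f (fun k => h (v k)) = h (f v)) ∧
    (Submodule.map (h : V →ₗ[𝔽] V)) '' S = T

/-- `X` is a strongly `f'`-invariant subspace of `W`, where `f'` is the restriction of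
`f` to `W`: `f(W,…,X,…,W) ⊆ X` for every slot. -/
def SInvIn (f : MultilinearMap 𝔽 (fun _ : Fin (m + 1) => V) V)
    (W X : Submodule 𝔽 V) : Prop :=
  ∀ (k : Fin (m + 1)) (v : Fin (m + 1) → V), (∀ t, v t ∈ W) → v k ∈ X → f v ∈ X

/-- `W` is `f'`-simple, `f'` being the restriction of `f` to `W`: the restricted map is
nonzero and the only strongly `f'`-invariant subspaces of `W` are `0` and `W`. -/
def SimpleIn (f : MultilinearMap 𝔽 (fun _ : Fin (m + 1) => V) V)
    (W : Submodule 𝔽 V) : Prop :=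
  (∃ v : Fin (m + 1) → V, (∀ t, v t ∈ W) ∧ f v ≠ 0) ∧
  ∀ X : Submodule 𝔽 V, X ≤ W → SInvIn f W X → X = ⊥ ∨ X = W

/-- The annihilator of the restriction `f'` of `f` to `W`. -/
def annIn (f : MultilinearMap 𝔽 (fun _ : Fin (m + 1) => V) V)
    (W : Submodule 𝔽 V) : Set V :=
  {w | w ∈ W ∧ ∀ (k : Fin (m + 1)) (v : Fin (m + 1) → V),
    (∀ t, v t ∈ W) → v k = w → f v = 0}

/-- `𝓘(w)`: the smallest strongly `f'`-invariant subspace of `W` containing `w`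
(equivalently, the ideal of `(W, f')` generated by `w`). -/
def idealGenIn (f : MultilinearMap 𝔽 (fun _ : Fin (m + 1) => V) V)
    (W : Submodule 𝔽 V) (w : V) : Submodule 𝔽 V :=
  sInf {X : Submodule 𝔽 V | X ≤ W ∧ SInvIn f W X ∧ w ∈ X}

/-- `S` is an `i`-division basis of `W` with respect to the restriction `f'` of `f`:
whenever `c ∈ S`, `b₁, …, b_{n-1} ∈ W` and `f'(b₁,…,c,…,b_{n-1}) = w ≠ 0` with `c` in
some slot `k`, then `c, b₁, …, b_{n-1} ∈ 𝓘(w)`. -/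
def IDivisionBasisIn (f : MultilinearMap 𝔽 (fun _ : Fin (m + 1) => V) V)
    (W : Submodule 𝔽 V) (S : Set V) : Prop :=
  ∀ c ∈ S, ∀ (k : Fin (m + 1)) (v : Fin (m + 1) → V),
    (∀ t, v t ∈ W) → v k = c → f v ≠ 0 → ∀ t, v t ∈ idealGenIn f W (f v)

/-! Two basis vectors that occur together in a nonzero product of basis vectors are connected,
through the two-step connection that multiplies by the remaining factors and then "divides" by
them again. The same product, projected onto the class of any basis vector in its support, is
nonzero, which is exactly one step of `≈`. Hence a product of basis vectors with one factor in
`⌢V_{[e i]}` lies in `⌢V_{[e i]}`, and one with factors in two different `≈`-classes vanishes;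
multilinearity extends both facts from basis vectors to the spans. Since `≈` is an equivalence
relation on the indices, the spans of its classes split the basis `b`. -/

theorem MultilinearMap.map_mem_of_forall_basis {R M N ι κ : Type*} [CommSemiring R]
    [AddCommMonoid M] [Module R M] [AddCommMonoid N] [Module R N] [Fintype ι]
    (g : MultilinearMap R (fun _ : ι => M) N) (b : Module.Basis κ R M) (P : Submodule R N)
    (v : ι → M) (h : ∀ u : ι → κ, (∀ t, u t ∈ (b.repr (v t)).support) → g (b ∘ u) ∈ P) :
    g v ∈ P := by
  have hv : v = fun t => ∑ j ∈ (b.repr (v t)).support, b.repr (v t) j • b j :=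
    funext fun t => (b.linearCombination_repr (v t)).symm
  rw [hv, g.map_sum_finset]
  refine P.sum_mem fun u hu => ?_
  rw [g.map_smul_univ]
  exact P.smul_mem _ (h u (Fintype.mem_piFinset.1 hu))

namespace Module.Basis

variable {R M ι : Type*} [Semiring R] [AddCommMonoid M] [Module R M]

theorem iSupIndep_span_image_setOf (b : Basis ι R M) {r : ι → ι → Prop} (hr : Equivalence r) :
    iSupIndep fun W : {W : Submodule R M // ∃ i, W = Submodule.span R (b '' {j | r i j})} =>
      W.1 := by
  rw [iSupIndep_def]
  rintro ⟨_, i, rfl⟩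
  refine Disjoint.mono_right (iSup₂_le fun W hW => ?_)
    (b.linearIndependent.disjoint_span_image (disjoint_compl_right (a := {j | r i j})))
  obtain ⟨_, j, rfl⟩ := W
  refine Submodule.span_mono (Set.image_mono fun k hjk hik => hW (Subtype.ext ?_))
  have hij : r i j := hr.trans hik (hr.symm hjk)
  have hclass : {l | r j l} = {l | r i l} :=
    Set.ext fun _ => ⟨hr.trans hij, hr.trans (hr.symm hij)⟩
  exact congrArg (fun s => Submodule.span R (b '' s)) hclass

theorem iSup_span_image_setOf_eq_top (b : Basis ι R M) {r : ι → ι → Prop} (hr : ∀ i, r i i) :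
    ⨆ W : {W : Submodule R M // ∃ i, W = Submodule.span R (b '' {j | r i j})}, W.1 = ⊤ := by
  rw [eq_top_iff, ← b.span_eq, Submodule.span_le]
  rintro _ ⟨j, rfl⟩
  exact Submodule.mem_iSup_of_mem ⟨_, j, rfl⟩ (Submodule.subset_span ⟨j, hr j, rfl⟩)

end Module.Basis

section Decomposition

variable (b : Module.Basis I 𝔽 V) (f : MultilinearMap 𝔽 (fun _ : Fin (m + 1) => V) V)

theorem mem_Fmap_iff_exists_singleton {U : Set (Vstar V)} {ξ : Fin m → BSym I} {w : Vstar V} :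
    w ∈ Fmap b f U ξ ↔ ∃ u ∈ U, w ∈ Fmap b f {u} ξ := by
  unfold Fmap
  split_ifs <;> aesop

theorem mem_iterF_iff_exists_singleton {U : Set (Vstar V)} {X : List (Fin m → BSym I)}
    {y : Vstar V} : y ∈ iterF b f U X ↔ ∃ u ∈ U, y ∈ iterF b f {u} X := by
  induction X generalizing U with
  | nil => simp [iterF]
  | cons ξ X ih =>
    change y ∈ iterF b f (Fmap b f U ξ) X ↔ ∃ u ∈ U, y ∈ iterF b f (Fmap b f {u} ξ) X
    constructor
    · intro hy
      obtain ⟨w, hw, hy⟩ := ih.1 hy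
      obtain ⟨u, hu, hw⟩ := (mem_Fmap_iff_exists_singleton b f).1 hw
      exact ⟨u, hu, ih.2 ⟨w, hw, hy⟩⟩
    · rintro ⟨u, hu, hy⟩
      obtain ⟨w, hw, hy⟩ := ih.1 hy
      refine ih.2 ?_
      exact ⟨w, (mem_Fmap_iff_exists_singleton b f).2 ⟨u, hu, hw⟩, hy⟩

theorem iterF_append (U : Set (Vstar V)) (X Y : List (Fin m → BSym I)) :
    iterF b f U (X ++ Y) = iterF b f (iterF b f U X) Y := by
  induction X generalizing U with
  | nil => rfl
  | cons ξ X ih => exact ih _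

theorem mem_Fmap_singleton_iff_barSwap (hm : 1 ≤ m) {u w : Vstar V} {ξ : Fin m → BSym I} :
    w ∈ Fmap b f {u} ξ ↔ u ∈ Fmap b f {w} (barSwap ∘ ξ) := by
  have hexcl : ¬((∀ t, (ξ t).1 = false) ∧ ∀ t, (ξ t).1 = true) := fun h => by
    simpa [h.2 ⟨0, hm⟩] using h.1 ⟨0, hm⟩
  simp only [Fmap, barSwap, Function.comp_apply, Bool.not_eq_false', Bool.not_eq_true']
  split_ifs <;> simp_all

theorem mem_iterF_reverse_barSwap (hm : 1 ≤ m) (X : List (Fin m → BSym I)) {x y : Vstar V}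
    (h : y ∈ iterF b f {x} X) : x ∈ iterF b f {y} (X.map (barSwap ∘ ·)).reverse := by
  induction X generalizing x with
  | nil => exact (h : y = x).symm
  | cons ξ X ih =>
    obtain ⟨w, hw, hy⟩ := (mem_iterF_iff_exists_singleton b f (X := X)).1 h
    rw [List.map_cons, List.reverse_cons, iterF_append]
    exact (mem_Fmap_iff_exists_singleton b f).2
      ⟨w, ih hy, (mem_Fmap_singleton_iff_barSwap b f hm).1 hw⟩

theorem connected_symm (hm : 1 ≤ m) {i j : I} (h : Connected b f i j) : Connected b f j i := by
  rcases h with rfl | ⟨X, hX, hij⟩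
  · exact Or.inl rfl
  · exact Or.inr ⟨_, by simpa using hX, mem_iterF_reverse_barSwap b f hm X hij⟩

theorem connected_of_map_basis_ne_zero (hm : 1 ≤ m) {u : Fin (m + 1) → I}
    (hu : f (b ∘ u) ≠ 0) (s t : Fin (m + 1)) : Connected b f (u s) (u t) := by
  have hinsert : ∀ k, Fin.insertNth k (b (u k)) (fun r => b (u (k.succAbove r))) = b ∘ u :=
    fun k => Fin.insertNth_self_removeNth k (b ∘ u)
  let w : Vstar V := ⟨f (b ∘ u), hu⟩
  have hmul : w ∈ Fmap b f {bstar b (u s)} fun r => (false, u (s.succAbove r)) := by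
    rw [Fmap, if_pos fun _ => rfl]
    exact ⟨s, Equiv.refl _, _, rfl, congrArg f (hinsert s)⟩
  have hdiv : bstar b (u t) ∈ Fmap b f {w} fun r => (true, u (t.succAbove r)) := by
    rw [Fmap, if_neg fun h => Bool.noConfusion (h ⟨0, hm⟩), if_pos fun _ => rfl]
    exact ⟨t, Equiv.refl _, _, rfl, congrArg f (hinsert t)⟩
  exact Or.inr ⟨[_, _], List.cons_ne_nil _ _,
    (mem_Fmap_iff_exists_singleton b f).2 ⟨w, hmul, hdiv⟩⟩

theorem coord_comp_projClass_self (c : I) :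
    b.coord c ∘ₗ projClass b f c = b.coord c := by
  refine b.ext fun j => ?_
  rw [LinearMap.comp_apply, projClass, b.constr_basis]
  split_ifs with hcj
  · rfl
  · have hjc : j ≠ c := fun h => hcj (Or.inl h.symm)
    simp [hjc]

theorem projClass_ne_zero {c : I} {x : V} (hx : b.repr x c ≠ 0) : projClass b f c x ≠ 0 :=
  fun h => hx (by simpa [h] using (LinearMap.congr_fun (coord_comp_projClass_self b f c) x).symm)

theorem approx_of_mem_support_map_basis (hm : 1 ≤ m) {u : Fin (m + 1) → I} {c : I}
    (hc : c ∈ (b.repr (f (b ∘ u))).support) (k : Fin (m + 1)) : Approx b f (u k) c := by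
  have hu : f (b ∘ u) ≠ 0 := fun h => by simp [h] at hc
  have hclass : ∀ r, (b ∘ u) r ∈ classSpan b f (u k) := fun r =>
    Submodule.subset_span ⟨u r, connected_of_map_basis_ne_zero b f hm hu k r, rfl⟩
  have h01 : (0 : Fin (m + 1)) < ⟨1, by omega⟩ := Fin.mk_lt_mk.2 Nat.one_pos
  exact .single (Or.inr ⟨0, _, h01, Or.inr ⟨b ∘ u, hclass 0, hclass _,
    projClass_ne_zero b f (Finsupp.mem_support_iff.1 hc)⟩⟩)

theorem approxStep_symm {c d : I} (h : ApproxStep b f c d) : ApproxStep b f d c :=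
  let ⟨k₁, k₂, hk, h⟩ := h
  ⟨k₁, k₂, hk, h.symm⟩

theorem approx_symm (hm : 1 ≤ m) {i j : I} (h : Approx b f i j) : Approx b f j i := by
  induction h with
  | refl => exact .refl
  | tail _ hcd ih =>
    exact .head (hcd.imp (connected_symm b f hm) (approxStep_symm b f)) ih

theorem approx_equivalence (hm : 1 ≤ m) : Equivalence (Approx b f) :=
  ⟨fun _ => .refl, approx_symm b f hm, .trans⟩

theorem stronglyInvariant_hatSpan (hm : 1 ≤ m) (i : I) : StronglyInvariant f (hatSpan b f i) := by
  intro k v hv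
  refine f.map_mem_of_forall_basis b _ v fun u hu => ?_
  have hik : Approx b f i (u k) := b.mem_span_image.1 hv (hu k)
  exact b.mem_span_image.2 fun c hc => hik.trans (approx_of_mem_support_map_basis b f hm hc k)

theorem fOrthogonal_hatSpan (hm : 1 ≤ m) {i j : I} (hij : ¬Approx b f i j) :
    FOrthogonal f (hatSpan b f i) (hatSpan b f j) := by
  intro k₁ k₂ _ v h₁ h₂
  refine (Submodule.mem_bot 𝔽).1 (f.map_mem_of_forall_basis b ⊥ v fun u hu => ?_)
  by_contra hu₀
  have hconn := connected_of_map_basis_ne_zero b f hm (mt (Submodule.mem_bot 𝔽).2 hu₀) k₁ k₂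
  have hi : Approx b f i (u k₁) := b.mem_span_image.1 h₁ (hu k₁)
  have hj : Approx b f (u k₂) j := approx_symm b f hm (b.mem_span_image.1 h₂ (hu k₂))
  exact hij (hi.trans (.head (Or.inl hconn) hj))

end Decomposition

/-- decomposition of an arbitrary `n`-ary algebra into `f`-orthogonal
ideals (strongly invariant subspaces = ideals). -/
theorem stmt18 (hm : 1 ≤ m) (b : Module.Basis I 𝔽 V)
    (f : MultilinearMap 𝔽 (fun _ : Fin (m + 1) => V) V) :
    iSupIndep (fun W : {W : Submodule 𝔽 V // ∃ i, W = hatSpan b f i} => W.1) ∧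
    (⨆ W : {W : Submodule 𝔽 V // ∃ i, W = hatSpan b f i}, W.1) = ⊤ ∧
    (∀ i, StronglyInvariant f (hatSpan b f i)) ∧
    (∀ i j, ¬ Approx b f i j → FOrthogonal f (hatSpan b f i) (hatSpan b f j)) :=
  ⟨b.iSupIndep_span_image_setOf (approx_equivalence b f hm),
    b.iSup_span_image_setOf_eq_top fun _ => .refl,
    stronglyInvariant_hatSpan b f hm,
    fun _ _ => fOrthogonal_hatSpan b f hm⟩
end
end

section
/- Let 𝔄 be an arbitrary n-ary algebra over a field 𝔽 (n ≥ 2) with product [·,…,·], ℬ a basis of 𝔄, and let ⌢𝔄_{[e_i]} be one of the ideals in the induced decomposition 𝔄 = ⊕ ⌢𝔄_{[e_i]}. Then the n-ary algebra (⌢𝔄_{[e_i]}, [·,…,·]) obtained by restricting the product is simple if and only if Ann(⌢𝔄_{[e_i]}) = 0 and ℬ′ := ℬ ∩ ⌢𝔄_{[e_i]} is an i-division basis of ⌢𝔄_{[e_i]}. -/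
/- Common setting: `V` is a vector space over a field `𝔽`, and `f` is an
`n`-linear map on `V` where `n = m + 1 ≥ 2` (i.e. `1 ≤ m`).  Tuples of
length `n - 1 = m` index the last arguments of the set-valued map `F`. -/

open scoped Classical

noncomputable section

variable {𝔽 V I : Type*}

variable [Field 𝔽] [AddCommGroup V] [Module 𝔽 V] {m : ℕ}

/-! A nonzero ideal `X` of `W` already contains a vector of the division basis `S`: a nonzero
`x ∈ X` sits in a nonzero product, and since `S` spans `W`, another slot of that product can be
filled with some `s ∈ S` keeping it nonzero; the division property then puts every argument,
`s` included, into the ideal generated by the product, which lies in `X`. Once some `s ∈ S`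
lies in `X`, every `y ∈ W` follows: take a nonzero product with `s` in one slot and put `y`,
or the old entry plus `y`, into another slot; one of the two products is nonzero. -/

namespace MultilinearMap

variable {R ι M N : Type*} [Semiring R] [AddCommMonoid M] [AddCommMonoid N] [Module R M]
  [Module R N] [DecidableEq ι] (f : MultilinearMap R (fun _ : ι => M) N)

theorem exists_mem_map_update_ne_zero_of_mem_span {v : ι → M} (hv : f v ≠ 0) {t : ι}
    {S : Set M} (ht : v t ∈ Submodule.span R S) :
    ∃ s ∈ S, f (Function.update v t s) ≠ 0 := by
  by_contra! h
  have hker : Submodule.span R S ≤ LinearMap.ker (f.toLinearMap v t) :=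
    Submodule.span_le.mpr h
  exact hv (by simpa using hker ht)

theorem map_update_ne_zero_or_map_update_add_ne_zero {v : ι → M} (hv : f v ≠ 0) (t : ι)
    (y : M) : f (Function.update v t y) ≠ 0 ∨ f (Function.update v t (v t + y)) ≠ 0 := by
  by_contra! h
  rw [f.map_update_add, Function.update_eq_self, h.1, add_zero] at h
  exact hv h.2

end MultilinearMap

variable {f : MultilinearMap 𝔽 (fun _ : Fin (m + 1) => V) V} {W X : Submodule 𝔽 V}

theorem update_mem_of_forall_mem {v : Fin (m + 1) → V} (hv : ∀ t, v t ∈ W) (k : Fin (m + 1))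
    {x : V} (hx : x ∈ W) (t : Fin (m + 1)) : Function.update v k x t ∈ W := by
  rcases eq_or_ne t k with rfl | ht
  · rwa [Function.update_self]
  · rw [Function.update_of_ne ht]
    exact hv t

variable (f W) in
def annSubmodule : Submodule 𝔽 V :=
  W ⊓ ⨅ (k : Fin (m + 1)) (v : Fin (m + 1) → V) (_ : ∀ t, v t ∈ W),
    LinearMap.ker (f.toLinearMap v k)

theorem coe_annSubmodule : (annSubmodule f W : Set V) = annIn f W := by
  ext w
  simp only [annSubmodule, SetLike.mem_coe, Submodule.mem_inf, Submodule.mem_iInf,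
    LinearMap.mem_ker, MultilinearMap.toLinearMap_apply, annIn, Set.mem_ofPred_eq]
  refine and_congr_right fun hw => ⟨fun h k v hv hvk => ?_, fun h k v hv => ?_⟩
  · simpa [← hvk] using h k v hv
  · exact h k _ (update_mem_of_forall_mem hv k hw) (Function.update_self k w v)

theorem sInvIn_annSubmodule : SInvIn f W (annSubmodule f W) := by
  intro k v hv hvk
  rw [← SetLike.mem_coe, coe_annSubmodule] at hvk
  rw [hvk.2 k v hv rfl]
  exact Submodule.zero_mem _

theorem idealGenIn_le (hXW : X ≤ W) (hX : SInvIn f W X) {w : V} (hw : w ∈ X) :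
    idealGenIn f W w ≤ X :=
  sInf_le ⟨hXW, hX, hw⟩

namespace SimpleIn

theorem le_idealGenIn (hW : SimpleIn f W) {w : V} (hw : w ≠ 0) : W ≤ idealGenIn f W w :=
  le_sInf fun X ⟨hXW, hX, hwX⟩ =>
    ((hW.2 X hXW hX).resolve_left fun h => hw (by simpa [h] using hwX)).ge

theorem annIn_eq (hW : SimpleIn f W) : annIn f W = {0} := by
  obtain ⟨⟨v, hv, hfv⟩, hmax⟩ := hW
  have hne : annSubmodule f W ≠ W := fun h => by
    have hv0 : v 0 ∈ annIn f W := by rw [← coe_annSubmodule, h]; exact hv 0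
    exact hfv (hv0.2 0 v hv rfl)
  have hbot := (hmax (annSubmodule f W) inf_le_left sInvIn_annSubmodule).resolve_right hne
  rw [← coe_annSubmodule, hbot, Submodule.bot_coe]

theorem iDivisionBasisIn (hW : SimpleIn f W) (S : Set V) : IDivisionBasisIn f W S :=
  fun _ _ _ _ hv _ hfv t => hW.le_idealGenIn hfv (hv t)

end SimpleIn

theorem exists_map_ne_zero_of_annIn_eq (hann : annIn f W = {0}) {x : V} (hxW : x ∈ W)
    (hx : x ≠ 0) :
    ∃ (k : Fin (m + 1)) (v : Fin (m + 1) → V), (∀ t, v t ∈ W) ∧ v k = x ∧ f v ≠ 0 := by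
  by_contra! h
  have hxann : x ∈ annIn f W := ⟨hxW, h⟩
  exact hx (by simpa [hann] using hxann)

namespace IDivisionBasisIn

variable {S : Set V} (hdiv : IDivisionBasisIn f W S) (hXW : X ≤ W) (hX : SInvIn f W X)
include hdiv hXW hX

theorem forall_mem {v : Fin (m + 1) → V} (hv : ∀ t, v t ∈ W) {k₁ k₂ : Fin (m + 1)}
    (hk₁ : v k₁ ∈ S) (hk₂ : v k₂ ∈ X) (hfv : f v ≠ 0) (t : Fin (m + 1)) : v t ∈ X :=
  idealGenIn_le hXW hX (hX k₂ v hv hk₂) (hdiv _ hk₁ k₁ v hv rfl hfv t)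

theorem le_of_mem (hm : 1 ≤ m) (hann : annIn f W = {0}) {s : V} (hsS : s ∈ S) (hsW : s ∈ W)
    (hs : s ≠ 0) (hsX : s ∈ X) : W ≤ X := by
  have : Nontrivial (Fin (m + 1)) := Fin.nontrivial_iff_two_le.mpr (by omega)
  obtain ⟨k, v, hv, rfl, hfv⟩ := exists_map_ne_zero_of_annIn_eq hann hsW hs
  obtain ⟨t, ht⟩ := exists_ne k
  have hvX : ∀ t, v t ∈ X := hdiv.forall_mem hXW hX hv hsS hsX hfv
  have hk (z : V) : Function.update v t z k = v k := Function.update_of_ne ht.symm z v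
  intro y hy
  rcases f.map_update_ne_zero_or_map_update_add_ne_zero hfv t y with h | h
  · simpa using hdiv.forall_mem hXW hX (update_mem_of_forall_mem hv t hy)
      (by rwa [hk]) (by rwa [hk]) h t
  · have hyt := hdiv.forall_mem hXW hX (update_mem_of_forall_mem hv t (W.add_mem (hv t) hy))
      (by rwa [hk]) (by rwa [hk]) h t
    rw [Function.update_self] at hyt
    exact (X.add_mem_iff_right (hvX t)).mp hyt

theorem eq_of_ne_bot (hm : 1 ≤ m) (hann : annIn f W = {0}) (hspan : Submodule.span 𝔽 S = W)
    (hX0 : X ≠ ⊥) : X = W := by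
  have : Nontrivial (Fin (m + 1)) := Fin.nontrivial_iff_two_le.mpr (by omega)
  obtain ⟨x, hxX, hx⟩ := (Submodule.ne_bot_iff X).1 hX0
  obtain ⟨k, v, hv, rfl, hfv⟩ := exists_map_ne_zero_of_annIn_eq hann (hXW hxX) hx
  obtain ⟨t, ht⟩ := exists_ne k
  obtain ⟨s, hsS, hfs⟩ := f.exists_mem_map_update_ne_zero_of_mem_span hfv (hspan ▸ hv t)
  have hsW : s ∈ W := hspan ▸ Submodule.subset_span hsS
  have hs : s ≠ 0 := by
    rintro rfl
    exact hfs (f.map_update_zero v t)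
  have hsX : s ∈ X := by
    simpa using hdiv.forall_mem hXW hX (update_mem_of_forall_mem hv t hsW) (k₁ := t) (k₂ := k)
      (by simpa) (by rwa [Function.update_of_ne ht.symm]) hfs t
  exact le_antisymm hXW (hdiv.le_of_mem hXW hX hm hann hsS hsW hs hsX)

end IDivisionBasisIn

theorem IDivisionBasisIn.simpleIn {S : Set V} (hdiv : IDivisionBasisIn f W S) (hm : 1 ≤ m)
    (hann : annIn f W = {0}) (hspan : Submodule.span 𝔽 S = W) (hW : W ≠ ⊥) :
    SimpleIn f W := by
  obtain ⟨x, hxW, hx⟩ := (Submodule.ne_bot_iff W).1 hW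
  obtain ⟨k, v, hv, -, hfv⟩ := exists_map_ne_zero_of_annIn_eq hann hxW hx
  exact ⟨⟨v, hv, hfv⟩, fun X hXW hX =>
    or_iff_not_imp_left.mpr (hdiv.eq_of_ne_bot hXW hX hm hann hspan)⟩

/-- the ideal `⌢𝔄_{[e i]}` is simple iff its annihilator is zero and
`ℬ ∩ ⌢𝔄_{[e i]}` is an `i`-division basis of it. -/
theorem stmt19 (hm : 1 ≤ m) (b : Module.Basis I 𝔽 V)
    (f : MultilinearMap 𝔽 (fun _ : Fin (m + 1) => V) V) (i : I) :
    SimpleIn f (hatSpan b f i) ↔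
      annIn f (hatSpan b f i) = {0} ∧
      IDivisionBasisIn f (hatSpan b f i)
        (Set.range ⇑b ∩ (hatSpan b f i : Set V)) := by
  set W := hatSpan b f i
  have hbW : ⇑b '' {j | Approx b f i j} ⊆ Set.range ⇑b ∩ W :=
    fun _ hy => ⟨Set.image_subset_range _ _ hy, Submodule.subset_span hy⟩
  have hspan : Submodule.span 𝔽 (Set.range ⇑b ∩ W) = W :=
    le_antisymm (Submodule.span_le.mpr Set.inter_subset_right) (Submodule.span_mono hbW)
  have hW : W ≠ ⊥ := (Submodule.ne_bot_iff W).2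
    ⟨b i, Submodule.subset_span ⟨i, Relation.ReflTransGen.refl, rfl⟩, b.ne_zero i⟩
  exact ⟨fun h => ⟨h.annIn_eq, h.iDivisionBasisIn _⟩,
    fun ⟨hann, hdiv⟩ => hdiv.simpleIn hm hann hspan hW⟩
end
end
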